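/- (Carleman inequality for the Laplacian in ℝ^d.) Let d ≥ 1. There exists a constant c > 0 depending only on d such that for all α > 0, R > 0, and every g ∈ H²(ℝ^d) with compact support contained in the set {x ∈ ℝ^d : |x/R + 3e₁|² ≥ 1}, one has (α^{3/2}/R²) ‖e^{α|x/R + 3e₁|²} g‖_{L²(ℝ^d)} + (α^{1/2}/R) ‖e^{α|x/R + 3e₁|²} ∇g‖_{L²(ℝ^d)} ≤ c ‖e^{α|x/R + 3e₁|²} Δg‖_{L²(ℝ^d)}. -/

import Mathlib

open MeasureTheory

/-- The Laplacian `Δg = Σ_k ∂²g/∂x_k²` of a function on `ℝ^d`. -/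
noncomputable def lapR {d : ℕ} (g : EuclideanSpace ℝ (Fin d) → ℂ)
    (x : EuclideanSpace ℝ (Fin d)) : ℂ :=
  ∑ k, fderiv ℝ (fun y => fderiv ℝ g y (EuclideanSpace.single k 1)) x
    (EuclideanSpace.single k 1)

/-!
Conjugate by the weight `φ x = a ‖x - p‖²` (with `a = α / R²` and `p = -3R e₁`): for
`v = e^φ u` one has `e^φ Δu = S + A` with `S = Δv + |∇φ|² v` and `A = -2 ∇φ · ∇v - (Δφ) v`,
hence `‖e^φ Δu‖² ≥ 4 ⟨S, A⟩`. As the Hessian of `φ` is `2a` times the identity, integration by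
parts (a Rellich identity for the radial derivative `(x - p) · ∇v`) evaluates the commutator
term exactly: `⟨S, A⟩ = 4a (‖∇v‖² + 4a² ‖|x - p| v‖²)`. On the support, `|x - p| ≥ R`, so the
second term controls `‖v‖ = ‖e^φ u‖`, and both together control `‖e^φ ∇u‖ = ‖∇v - v ∇φ‖`.
A complex-valued function is handled through its real and imaginary parts.
-/

namespace Carleman

theorem integrable_mul_of_hasCompactSupport {X : Type*} [TopologicalSpace X]
    [MeasurableSpace X] [OpensMeasurableSpace X] {μ : Measure X} [IsFiniteMeasureOnCompacts μ]
    {f g : X → ℝ} (hf : Continuous f) (hg : Continuous g) (hcs : HasCompactSupport g) :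
    Integrable (fun x => f x * g x) μ :=
  (hf.mul hg).integrable_of_hasCompactSupport hcs.mul_left

theorem integrable_mul_sq_of_hasCompactSupport {X : Type*} [TopologicalSpace X]
    [MeasurableSpace X] [OpensMeasurableSpace X] {μ : Measure X} [IsFiniteMeasureOnCompacts μ]
    {w f : X → ℝ} (hw : Continuous w) (hf : Continuous f) (hcs : HasCompactSupport f) :
    Integrable (fun x => w x * f x ^ 2) μ :=
  (integrable_mul_of_hasCompactSupport (f := fun x => w x * f x) (hw.mul hf) hf hcs).congr
    (.of_forall fun x => by ring)

theorem sq_norm_eq_re_sq_add_im_sq (z : ℂ) : ‖z‖ ^ 2 = z.re ^ 2 + z.im ^ 2 :=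
  sub_eq_iff_eq_add'.mp (Complex.sq_norm_sub_sq_re z)

theorem integral_mul_norm_sq_eq_add {X : Type*} [TopologicalSpace X] [MeasurableSpace X]
    [OpensMeasurableSpace X] {μ : Measure X} [IsFiniteMeasureOnCompacts μ] {w : X → ℝ}
    {h : X → ℂ} (hw : Continuous w) (hh : Continuous h) (hcs : HasCompactSupport h) :
    ∫ x, w x * ‖h x‖ ^ 2 ∂μ = (∫ x, w x * (h x).re ^ 2 ∂μ) + ∫ x, w x * (h x).im ^ 2 ∂μ := by
  rw [← integral_add
    (integrable_mul_sq_of_hasCompactSupport (f := fun x => (h x).re) hw (by fun_prop)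
      (hcs.comp_left Complex.zero_re))
    (integrable_mul_sq_of_hasCompactSupport (f := fun x => (h x).im) hw (by fun_prop)
      (hcs.comp_left Complex.zero_im))]
  simp only [sq_norm_eq_re_sq_add_im_sq, mul_add]

theorem mul_sqrt_add_mul_sqrt_le_sqrt {a b s t J : ℝ} (hs : 0 ≤ s) (ht : 0 ≤ t)
    (h : 2 * (a ^ 2 * s + b ^ 2 * t) ≤ J) : a * √s + b * √t ≤ √J := by
  refine Real.le_sqrt_of_sq_le ?_
  nlinarith [sq_nonneg (a * √s - b * √t), Real.sq_sqrt hs, Real.sq_sqrt ht]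

theorem sq_rpow_div_two {x : ℝ} (hx : 0 ≤ x) (s : ℝ) : (x ^ (s / 2)) ^ 2 = x ^ s := by
  rw [← Real.rpow_natCast, ← Real.rpow_mul hx]
  norm_num

theorem norm_inv_smul_add_sq {E : Type*} [NormedAddCommGroup E] [NormedSpace ℝ E] {R : ℝ}
    (hR : 0 < R) (x c : E) : ‖R⁻¹ • x + c‖ ^ 2 = ‖x - -(R • c)‖ ^ 2 / R ^ 2 := by
  have hx : R⁻¹ • x + c = R⁻¹ • (x - -(R • c)) := by simp [smul_smul, hR.ne']
  rw [hx, norm_smul, Real.norm_of_nonneg (inv_nonneg.2 hR.le)]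
  field_simp

variable {ι : Type*}

theorem sum_sq_sub_eq_norm_sub_sq [Fintype ι] (x p : EuclideanSpace ℝ ι) :
    ∑ k, (x k - p k) ^ 2 = ‖x - p‖ ^ 2 := by
  simp [EuclideanSpace.norm_sq_eq]

variable [DecidableEq ι] {F G : Type*} [NormedAddCommGroup F] [NormedSpace ℝ F]
  [NormedAddCommGroup G] [NormedSpace ℝ G]

noncomputable def partialDeriv (k : ι) (f : EuclideanSpace ℝ ι → F)
    (x : EuclideanSpace ℝ ι) : F :=
  fderiv ℝ f x (EuclideanSpace.single k 1)

section Support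

variable {f : EuclideanSpace ℝ ι → F} {x : EuclideanSpace ℝ ι}

theorem _root_.HasCompactSupport.partialDeriv (hf : HasCompactSupport f) (k : ι) :
    HasCompactSupport (partialDeriv k f) :=
  (hf.fderiv ℝ).comp_left (g := fun T : EuclideanSpace ℝ ι →L[ℝ] F => T _) rfl

theorem partialDeriv_of_notMem_tsupport (hx : x ∉ tsupport f) (k : ι) :
    partialDeriv k f x = 0 := by
  rw [partialDeriv, fderiv_of_notMem_tsupport ℝ hx, zero_apply]

theorem notMem_tsupport_partialDeriv (hx : x ∉ tsupport f) (k : ι) :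
    x ∉ tsupport (partialDeriv k f) := fun h =>
  hx (tsupport_fderiv_subset ℝ (closure_mono (Function.support_comp_subset
    (g := fun T : EuclideanSpace ℝ ι →L[ℝ] F => T (EuclideanSpace.single k 1)) rfl _) h))

end Support

variable [Fintype ι]

noncomputable def laplacian (f : EuclideanSpace ℝ ι → F) (x : EuclideanSpace ℝ ι) : F :=
  ∑ k, partialDeriv k (partialDeriv k f) x

theorem lapR_eq_laplacian {d : ℕ} (g : EuclideanSpace ℝ (Fin d) → ℂ) :
    lapR g = laplacian g :=
  rfl

section PartialDeriv

variable {f : EuclideanSpace ℝ ι → F} {x : EuclideanSpace ℝ ι}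

theorem _root_.HasFDerivAt.partialDeriv_eq {f' : EuclideanSpace ℝ ι →L[ℝ] F}
    (h : HasFDerivAt f f' x) (k : ι) : partialDeriv k f x = f' (EuclideanSpace.single k 1) := by
  rw [partialDeriv, h.fderiv]

theorem _root_.ContDiff.partialDeriv {m : ℕ} (hf : ContDiff ℝ (m + 1) f) (k : ι) :
    ContDiff ℝ m (partialDeriv k f) :=
  (hf.fderiv_right le_rfl).clm_apply contDiff_const

theorem continuous_partialDeriv (hf : ContDiff ℝ 1 f) (k : ι) :
    Continuous (partialDeriv k f) :=
  (hf.partialDeriv (m := 0) k).continuous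

theorem partialDeriv_add {g : EuclideanSpace ℝ ι → F} (hf : DifferentiableAt ℝ f x)
    (hg : DifferentiableAt ℝ g x) (k : ι) :
    partialDeriv k (fun y => f y + g y) x = partialDeriv k f x + partialDeriv k g x :=
  (hf.hasFDerivAt.add hg.hasFDerivAt).partialDeriv_eq k

theorem partialDeriv_sum {s : Finset ι} {f : ι → EuclideanSpace ℝ ι → F}
    (hf : ∀ i ∈ s, DifferentiableAt ℝ (f i) x) (k : ι) :
    partialDeriv k (fun y => ∑ i ∈ s, f i y) x = ∑ i ∈ s, partialDeriv k (f i) x :=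
  ((HasFDerivAt.fun_sum fun i hi => (hf i hi).hasFDerivAt).partialDeriv_eq k).trans
    (sum_apply ..)

theorem partialDeriv_clm_comp (T : F →L[ℝ] G) (hf : DifferentiableAt ℝ f x) (k : ι) :
    partialDeriv k (fun y => T (f y)) x = T (partialDeriv k f x) :=
  (T.hasFDerivAt.comp x hf.hasFDerivAt).partialDeriv_eq k

theorem laplacian_clm_comp (T : F →L[ℝ] G) (hf : ContDiff ℝ 2 f) (x : EuclideanSpace ℝ ι) :
    laplacian (fun y => T (f y)) x = T (laplacian f x) := by
  refine (map_sum T _ _).symm ▸ Finset.sum_congr rfl fun k _ => ?_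
  have hdf : partialDeriv k (fun y => T (f y)) = fun y => T (partialDeriv k f y) :=
    funext fun y => partialDeriv_clm_comp T (hf.differentiable two_ne_zero y) k
  rw [hdf]
  exact partialDeriv_clm_comp T ((hf.partialDeriv (m := 1) k).differentiable one_ne_zero x) k

theorem partialDeriv_comm (hf : ContDiff ℝ 2 f) (j k : ι) (x : EuclideanSpace ℝ ι) :
    partialDeriv j (partialDeriv k f) x = partialDeriv k (partialDeriv j f) x := by
  have hd2 : DifferentiableAt ℝ (fderiv ℝ f) x :=
    (hf.fderiv_right (m := 1) le_rfl).differentiable one_ne_zero x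
  have hsecond : ∀ i l, partialDeriv l (partialDeriv i f) x
      = fderiv ℝ (fderiv ℝ f) x (EuclideanSpace.single l 1) (EuclideanSpace.single i 1) :=
    fun i l =>
      partialDeriv_clm_comp (ContinuousLinearMap.apply ℝ F (EuclideanSpace.single i 1)) hd2 l
  rw [hsecond, hsecond]
  exact hf.contDiffAt.isSymmSndFDerivAt (by simp) _ _

theorem laplacian_of_notMem_tsupport (hx : x ∉ tsupport f) : laplacian f x = 0 :=
  Finset.sum_eq_zero fun k _ =>
    partialDeriv_of_notMem_tsupport (notMem_tsupport_partialDeriv hx k) k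

theorem continuous_laplacian (hf : ContDiff ℝ 2 f) : Continuous (laplacian f) :=
  continuous_finsetSum _ fun k _ => continuous_partialDeriv (hf.partialDeriv (m := 1) k) k

theorem _root_.HasCompactSupport.laplacian (hf : HasCompactSupport f) :
    HasCompactSupport (laplacian f) :=
  .intro hf fun _ hx => laplacian_of_notMem_tsupport hx

theorem norm_sq_le_sum_norm_sq_apply_single (T : EuclideanSpace ℝ ι →L[ℝ] F) :
    ‖T‖ ^ 2 ≤ ∑ k, ‖T (EuclideanSpace.single k 1)‖ ^ 2 := by
  have hb : ‖T‖ ≤ √(∑ k, ‖T (EuclideanSpace.single k 1)‖ ^ 2) := by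
    refine T.opNorm_le_bound (Real.sqrt_nonneg _) fun y => ?_
    have hy : y = ∑ k, y k • EuclideanSpace.single k 1 := by
      simpa using ((EuclideanSpace.basisFun ι ℝ).sum_repr y).symm
    calc ‖T y‖ = ‖∑ k, y k • T (EuclideanSpace.single k 1)‖ := by
          conv_lhs => rw [hy]
          simp [map_sum]
      _ ≤ ∑ k, ‖y k‖ * ‖T (EuclideanSpace.single k 1)‖ :=
          (norm_sum_le _ _).trans_eq (by simp [norm_smul])
      _ ≤ ‖y‖ * √(∑ k, ‖T (EuclideanSpace.single k 1)‖ ^ 2) := by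
          rw [EuclideanSpace.norm_eq]
          exact Real.sum_mul_le_sqrt_mul_sqrt _ _ _
      _ = _ := mul_comm _ _
  calc ‖T‖ ^ 2 ≤ √(∑ k, ‖T (EuclideanSpace.single k 1)‖ ^ 2) ^ 2 := by gcongr
    _ = _ := Real.sq_sqrt (by positivity)

end PartialDeriv

section Real

variable {f g : EuclideanSpace ℝ ι → ℝ} {x : EuclideanSpace ℝ ι}

theorem partialDeriv_mul (hf : DifferentiableAt ℝ f x) (hg : DifferentiableAt ℝ g x) (k : ι) :
    partialDeriv k (fun y => f y * g y) x
      = partialDeriv k f x * g x + f x * partialDeriv k g x := by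
  refine ((hf.hasFDerivAt.mul hg.hasFDerivAt).partialDeriv_eq k).trans ?_
  simp only [add_apply, smul_apply, smul_eq_mul, partialDeriv]
  ring

theorem partialDeriv_sub_coord (p : EuclideanSpace ℝ ι) (j k : ι) :
    partialDeriv j (fun y : EuclideanSpace ℝ ι => y k - p k) x = if k = j then 1 else 0 := by
  have h : HasFDerivAt (fun y : EuclideanSpace ℝ ι => y k - p k)
      (EuclideanSpace.proj (𝕜 := ℝ) k) x :=
    (EuclideanSpace.proj (𝕜 := ℝ) k).hasFDerivAt.sub_const _
  simp [h.partialDeriv_eq j, PiLp.single_apply]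

theorem partialDeriv_norm_sub_sq (p : EuclideanSpace ℝ ι) (k : ι) :
    partialDeriv k (fun y => ‖y - p‖ ^ 2) x = 2 * (x k - p k) := by
  refine (((hasFDerivAt_id x).sub_const p).norm_sq.partialDeriv_eq k).trans ?_
  simp [EuclideanSpace.inner_single_right]

theorem integral_mul_partialDeriv (hf : ContDiff ℝ 1 f) (hg : ContDiff ℝ 1 g)
    (hcs : HasCompactSupport g) (k : ι) :
    ∫ x, f x * partialDeriv k g x = -∫ x, partialDeriv k f x * g x :=
  integral_mul_fderiv_eq_neg_fderiv_mul_of_integrable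
    (integrable_mul_of_hasCompactSupport (continuous_partialDeriv hf k) hg.continuous hcs)
    (integrable_mul_of_hasCompactSupport hf.continuous (continuous_partialDeriv hg k)
      (hcs.partialDeriv k))
    (integrable_mul_of_hasCompactSupport hf.continuous hg.continuous hcs)
    (fun x _ => hf.differentiable one_ne_zero x) (fun x _ => hg.differentiable one_ne_zero x)

end Real

noncomputable def radialDeriv (p : EuclideanSpace ℝ ι) (f : EuclideanSpace ℝ ι → ℝ)
    (x : EuclideanSpace ℝ ι) : ℝ :=
  ∑ k, (x k - p k) * partialDeriv k f x

section Radial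

variable (p : EuclideanSpace ℝ ι) {f : EuclideanSpace ℝ ι → ℝ} {x : EuclideanSpace ℝ ι}

theorem radialDeriv_of_notMem_tsupport (hx : x ∉ tsupport f) : radialDeriv p f x = 0 :=
  Finset.sum_eq_zero fun k _ => by rw [partialDeriv_of_notMem_tsupport hx, mul_zero]

theorem contDiff_radialDeriv {m : ℕ} (hf : ContDiff ℝ (m + 1) f) :
    ContDiff ℝ m (radialDeriv p f) :=
  ContDiff.sum fun k _ =>
    ((EuclideanSpace.proj (𝕜 := ℝ) k).contDiff.sub contDiff_const).mul (hf.partialDeriv k)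

theorem partialDeriv_radialDeriv (hf : ContDiff ℝ 2 f) (j : ι) (x : EuclideanSpace ℝ ι) :
    partialDeriv j (radialDeriv p f) x
      = partialDeriv j f x + radialDeriv p (partialDeriv j f) x := by
  have hcoord : ∀ k, DifferentiableAt ℝ (fun y : EuclideanSpace ℝ ι => y k - p k) x :=
    fun k => (EuclideanSpace.proj (𝕜 := ℝ) k).differentiableAt.sub_const _
  have hdf : ∀ k, DifferentiableAt ℝ (partialDeriv k f) x := fun k =>
    (hf.partialDeriv (m := 1) k).differentiable one_ne_zero x
  unfold radialDeriv
  rw [partialDeriv_sum (f := fun k y => (y k - p k) * partialDeriv k f y)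
    fun k _ => (hcoord k).mul (hdf k)]
  simp only [partialDeriv_mul (hcoord _) (hdf _), partialDeriv_sub_coord, ite_mul, one_mul,
    zero_mul, Finset.sum_add_distrib, Finset.sum_ite_eq', Finset.mem_univ, if_true,
    partialDeriv_comm hf j]

theorem radialDeriv_norm_sub_sq (x : EuclideanSpace ℝ ι) :
    radialDeriv p (fun y => ‖y - p‖ ^ 2) x = 2 * ‖x - p‖ ^ 2 := by
  simp only [radialDeriv, partialDeriv_norm_sub_sq]
  rw [← sum_sq_sub_eq_norm_sub_sq, Finset.mul_sum]
  exact Finset.sum_congr rfl fun k _ => by ring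

end Radial

section IntegrationByParts

variable {f h : EuclideanSpace ℝ ι → ℝ}

theorem integral_mul_partialDeriv_mul_self (hf : ContDiff ℝ 1 f) (hh : ContDiff ℝ 1 h)
    (hcs : HasCompactSupport h) (k : ι) :
    ∫ x, f x * partialDeriv k h x * h x = -(1 / 2) * ∫ x, partialDeriv k f x * h x ^ 2 := by
  have hsq : ∀ x, partialDeriv k (fun y => h y * h y) x = 2 * (partialDeriv k h x * h x) :=
    fun x => by
      rw [partialDeriv_mul (hh.differentiable one_ne_zero x) (hh.differentiable one_ne_zero x)]
      ring
  calc ∫ x, f x * partialDeriv k h x * h x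
      = (1 / 2) * ∫ x, f x * partialDeriv k (fun y => h y * h y) x := by
        rw [← integral_const_mul]
        exact integral_congr_ae (.of_forall fun x => by simp only [hsq]; ring)
    _ = -(1 / 2) * ∫ x, partialDeriv k f x * h x ^ 2 := by
        rw [integral_mul_partialDeriv hf (hh.mul hh) hcs.mul_left]
        simp only [sq]
        ring

/-- The divergence of the vector field `f (x - p)` is `(x - p) · ∇f + n f`. -/
theorem integral_mul_radialDeriv_mul_self (p : EuclideanSpace ℝ ι) (hf : ContDiff ℝ 1 f)
    (hh : ContDiff ℝ 1 h) (hcs : HasCompactSupport h) :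
    ∫ x, f x * radialDeriv p h x * h x
      = -(1 / 2) * ∫ x, (radialDeriv p f x + Fintype.card ι * f x) * h x ^ 2 := by
  have hcoord : ∀ k, ContDiff ℝ 1 (fun y : EuclideanSpace ℝ ι => y k - p k) := fun k =>
    (EuclideanSpace.proj (𝕜 := ℝ) k).contDiff.sub contDiff_const
  have hterm : ∀ k, ∫ x, f x * (x k - p k) * partialDeriv k h x * h x
      = -(1 / 2) * ∫ x, (partialDeriv k f x * (x k - p k) + f x) * h x ^ 2 := fun k => by
    rw [integral_mul_partialDeriv_mul_self (hf.mul (hcoord k)) hh hcs k]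
    refine congrArg _ (integral_congr_ae (.of_forall fun x => ?_))
    simp only [partialDeriv_mul (hf.differentiable one_ne_zero x)
      ((hcoord k).differentiable one_ne_zero x), partialDeriv_sub_coord, if_true, mul_one]
  have hcoord' : ∀ k, Continuous fun x : EuclideanSpace ℝ ι => x k - p k := fun k =>
    (hcoord k).continuous
  have hdf := continuous_partialDeriv hf
  have hdh := continuous_partialDeriv hh
  calc ∫ x, f x * radialDeriv p h x * h x
      = ∑ k, ∫ x, f x * (x k - p k) * partialDeriv k h x * h x := by
        rw [← integral_finsetSum _ fun k _ =>
          integrable_mul_of_hasCompactSupport (by fun_prop) hh.continuous hcs]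
        simp only [radialDeriv, Finset.mul_sum, Finset.sum_mul, mul_assoc]
    _ = -(1 / 2) * ∫ x, (radialDeriv p f x + Fintype.card ι * f x) * h x ^ 2 := by
        simp only [hterm, ← Finset.mul_sum]
        rw [← integral_finsetSum _ fun k _ =>
          integrable_mul_sq_of_hasCompactSupport (by fun_prop) hh.continuous hcs]
        refine congrArg _ (integral_congr_ae (.of_forall fun x => ?_))
        simp only [radialDeriv, add_mul, Finset.sum_mul, Finset.sum_add_distrib, Finset.sum_const,
          Finset.card_univ, nsmul_eq_mul, mul_comm (partialDeriv _ f _)]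
        ring

theorem integral_radialDeriv_mul_self (p : EuclideanSpace ℝ ι) (hh : ContDiff ℝ 1 h)
    (hcs : HasCompactSupport h) :
    ∫ x, radialDeriv p h x * h x = -(Fintype.card ι / 2) * ∫ x, h x ^ 2 := by
  have hdiv := integral_mul_radialDeriv_mul_self p (f := fun _ => 1) contDiff_const hh hcs
  have h0 : ∀ x, radialDeriv p (fun _ => (1 : ℝ)) x = 0 := fun x =>
    Finset.sum_eq_zero fun k _ => by simp [partialDeriv]
  simp only [one_mul, h0, zero_add, mul_one] at hdiv
  rw [hdiv, integral_const_mul]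
  ring

end IntegrationByParts

section Commutator

variable (p : EuclideanSpace ℝ ι) {v : EuclideanSpace ℝ ι → ℝ}

theorem integral_mul_laplacian_self (hv : ContDiff ℝ 2 v) (hvc : HasCompactSupport v) :
    ∫ x, v x * laplacian v x = -∑ k, ∫ x, partialDeriv k v x ^ 2 := by
  have hdv : ∀ k, ContDiff ℝ 1 (partialDeriv k v) := fun k => hv.partialDeriv k
  simp only [laplacian, Finset.mul_sum]
  rw [integral_finsetSum _ fun k _ => integrable_mul_of_hasCompactSupport hv.continuous
    (continuous_partialDeriv (hdv k) k) ((hvc.partialDeriv k).partialDeriv k),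
    ← Finset.sum_neg_distrib]
  refine Finset.sum_congr rfl fun k _ => ?_
  rw [integral_mul_partialDeriv (hv.of_le one_le_two) (hdv k) (hvc.partialDeriv k)]
  simp only [sq]

theorem integral_radialDeriv_mul_laplacian (hv : ContDiff ℝ 2 v) (hvc : HasCompactSupport v) :
    ∫ x, radialDeriv p v x * laplacian v x
      = (Fintype.card ι / 2 - 1) * ∑ k, ∫ x, partialDeriv k v x ^ 2 := by
  have hdv : ∀ k, ContDiff ℝ 1 (partialDeriv k v) := fun k => hv.partialDeriv k
  have hdvc : ∀ k, Continuous (partialDeriv k v) := fun k => (hdv k).continuous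
  have hDv : ContDiff ℝ 1 (radialDeriv p v) := contDiff_radialDeriv p hv
  have hDdv : ∀ k, Continuous (radialDeriv p (partialDeriv k v)) := fun k =>
    (contDiff_radialDeriv (m := 0) p (hdv k)).continuous
  have hterm : ∀ k, ∫ x, radialDeriv p v x * partialDeriv k (partialDeriv k v) x
      = (Fintype.card ι / 2 - 1) * ∫ x, partialDeriv k v x ^ 2 := fun k => by
    rw [integral_mul_partialDeriv hDv (hdv k) (hvc.partialDeriv k)]
    simp only [partialDeriv_radialDeriv p hv, add_mul]
    rw [integral_add (integrable_mul_of_hasCompactSupport (hdvc k) (hdvc k) (hvc.partialDeriv k))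
      (integrable_mul_of_hasCompactSupport (hDdv k) (hdvc k) (hvc.partialDeriv k)),
      integral_radialDeriv_mul_self p (hdv k) (hvc.partialDeriv k)]
    simp only [← sq]
    ring
  simp only [laplacian, Finset.mul_sum]
  rw [integral_finsetSum _ fun k _ => integrable_mul_of_hasCompactSupport hDv.continuous
    (continuous_partialDeriv (hdv k) k) ((hvc.partialDeriv k).partialDeriv k)]
  exact Finset.sum_congr rfl fun k _ => hterm k

theorem integral_norm_sub_sq_mul_radialDeriv_mul_self (hv : ContDiff ℝ 2 v)
    (hvc : HasCompactSupport v) :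
    ∫ x, ‖x - p‖ ^ 2 * radialDeriv p v x * v x
      = -(Fintype.card ι / 2 + 1) * ∫ x, ‖x - p‖ ^ 2 * v x ^ 2 := by
  rw [integral_mul_radialDeriv_mul_self p (f := fun y => ‖y - p‖ ^ 2)
    ((contDiff_id.sub contDiff_const).norm_sq ℝ) (hv.of_le one_le_two) hvc,
    ← integral_const_mul, ← integral_const_mul]
  refine integral_congr_ae (.of_forall fun x => ?_)
  simp only [radialDeriv_norm_sub_sq]
  ring

theorem integral_carleman_commutator (μ : ℝ) (hv : ContDiff ℝ 2 v)
    (hvc : HasCompactSupport v) :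
    ∫ x, (laplacian v x + μ ^ 2 * ‖x - p‖ ^ 2 * v x)
        * (-2 * μ * radialDeriv p v x - Fintype.card ι * μ * v x)
      = 2 * μ * (∑ k, ∫ x, partialDeriv k v x ^ 2)
        + 2 * μ ^ 3 * ∫ x, ‖x - p‖ ^ 2 * v x ^ 2 := by
  have hDv : Continuous (radialDeriv p v) := (contDiff_radialDeriv (m := 1) p hv).continuous
  have hΔv : Continuous (laplacian v) := continuous_laplacian hv
  have hnorm : Continuous fun x : EuclideanSpace ℝ ι => ‖x - p‖ ^ 2 := by fun_prop
  have i₁ := integrable_mul_of_hasCompactSupport (μ := volume) hDv hΔv hvc.laplacian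
  have i₂ := integrable_mul_of_hasCompactSupport (μ := volume) hv.continuous hΔv hvc.laplacian
  have i₃ := integrable_mul_of_hasCompactSupport (μ := volume)
    (f := fun x => ‖x - p‖ ^ 2 * radialDeriv p v x) (hnorm.mul hDv) hv.continuous hvc
  have i₄ := integrable_mul_sq_of_hasCompactSupport (μ := volume) hnorm hv.continuous hvc
  have hexpand : ∀ x, (laplacian v x + μ ^ 2 * ‖x - p‖ ^ 2 * v x)
        * (-2 * μ * radialDeriv p v x - Fintype.card ι * μ * v x)
      = -2 * μ * (radialDeriv p v x * laplacian v x)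
        - Fintype.card ι * μ * (v x * laplacian v x)
        - 2 * μ ^ 3 * (‖x - p‖ ^ 2 * radialDeriv p v x * v x)
        - Fintype.card ι * μ ^ 3 * (‖x - p‖ ^ 2 * v x ^ 2) := fun x => by ring
  simp only [hexpand]
  rw [integral_sub (by fun_prop) (by fun_prop), integral_sub (by fun_prop) (by fun_prop),
    integral_sub (by fun_prop) (by fun_prop), integral_const_mul, integral_const_mul,
    integral_const_mul, integral_const_mul, integral_radialDeriv_mul_laplacian p hv hvc,
    integral_mul_laplacian_self hv hvc, integral_norm_sub_sq_mul_radialDeriv_mul_self p hv hvc]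
  ring

end Commutator

section Conjugation

variable {φ u : EuclideanSpace ℝ ι → ℝ} {x : EuclideanSpace ℝ ι}

theorem partialDeriv_exp_mul (hφ : DifferentiableAt ℝ φ x) (hu : DifferentiableAt ℝ u x)
    (k : ι) :
    partialDeriv k (fun y => Real.exp (φ y) * u y) x
      = partialDeriv k φ x * (Real.exp (φ x) * u x) + Real.exp (φ x) * partialDeriv k u x := by
  rw [partialDeriv_mul hφ.exp hu, hφ.hasFDerivAt.exp.partialDeriv_eq k, smul_apply, smul_eq_mul,
    ← hφ.hasFDerivAt.partialDeriv_eq k]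
  ring

theorem exp_mul_laplacian (hφ : ContDiff ℝ 2 φ) (hu : ContDiff ℝ 2 u) (x : EuclideanSpace ℝ ι) :
    Real.exp (φ x) * laplacian u x
      = laplacian (fun y => Real.exp (φ y) * u y) x
        - 2 * ∑ k, partialDeriv k φ x * partialDeriv k (fun y => Real.exp (φ y) * u y) x
        + (∑ k, partialDeriv k φ x ^ 2 - laplacian φ x) * (Real.exp (φ x) * u x) := by
  set v := fun y => Real.exp (φ y) * u y
  have dφ : Differentiable ℝ φ := hφ.differentiable two_ne_zero
  have du : Differentiable ℝ u := hu.differentiable two_ne_zero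
  have dφ' : ∀ k, Differentiable ℝ (partialDeriv k φ) := fun k =>
    (hφ.partialDeriv (m := 1) k).differentiable one_ne_zero
  have du' : ∀ k, Differentiable ℝ (partialDeriv k u) := fun k =>
    (hu.partialDeriv (m := 1) k).differentiable one_ne_zero
  have hdv : ∀ k, partialDeriv k v
      = fun y => partialDeriv k φ y * v y + Real.exp (φ y) * partialDeriv k u y := fun k =>
    funext fun y => partialDeriv_exp_mul (dφ y) (du y) k
  have hdvx : ∀ k, partialDeriv k v x
      = partialDeriv k φ x * v x + Real.exp (φ x) * partialDeriv k u x := fun k => by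
    rw [hdv k]
  have hddv : ∀ k, partialDeriv k (partialDeriv k v) x
      = partialDeriv k (partialDeriv k φ) x * v x
        + partialDeriv k φ x * (partialDeriv k φ x * v x + Real.exp (φ x) * partialDeriv k u x)
        + (partialDeriv k φ x * (Real.exp (φ x) * partialDeriv k u x)
          + Real.exp (φ x) * partialDeriv k (partialDeriv k u) x) := fun k => by
    rw [hdv k, partialDeriv_add (f := fun y => partialDeriv k φ y * v y)
        (g := fun y => Real.exp (φ y) * partialDeriv k u y)
        ((dφ' k x).mul ((dφ x).exp.mul (du x))) ((dφ x).exp.mul (du' k x)),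
      partialDeriv_mul (g := v) (dφ' k x) ((dφ x).exp.mul (du x)),
      partialDeriv_exp_mul (dφ x) (du' k x), hdvx k]
  simp only [laplacian, Finset.mul_sum, Finset.sum_mul, ← Finset.sum_sub_distrib,
    ← Finset.sum_add_distrib]
  refine Finset.sum_congr rfl fun k _ => ?_
  rw [hddv k, hdvx k]
  ring

end Conjugation

section Weight

variable (a : ℝ) (p : EuclideanSpace ℝ ι) {u : EuclideanSpace ℝ ι → ℝ}

theorem partialDeriv_weight (k : ι) (x : EuclideanSpace ℝ ι) :
    partialDeriv k (fun y => a * ‖y - p‖ ^ 2) x = 2 * a * (x k - p k) := by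
  refine ((((hasFDerivAt_id x).sub_const p).norm_sq.const_mul a).partialDeriv_eq k).trans ?_
  simp [EuclideanSpace.inner_single_right]
  ring

theorem laplacian_weight (x : EuclideanSpace ℝ ι) :
    laplacian (fun y => a * ‖y - p‖ ^ 2) x = 2 * a * Fintype.card ι := by
  have h : ∀ k (x : EuclideanSpace ℝ ι),
      HasFDerivAt (fun y : EuclideanSpace ℝ ι => 2 * a * (y k - p k))
        ((2 * a) • EuclideanSpace.proj (𝕜 := ℝ) k) x := fun k x =>
    ((EuclideanSpace.proj (𝕜 := ℝ) k).hasFDerivAt.sub_const _).const_mul (2 * a)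
  simp only [laplacian, funext (partialDeriv_weight a p _), (h _ x).partialDeriv_eq]
  simp [mul_comm]

theorem exp_weight_mul_laplacian (hu : ContDiff ℝ 2 u) (x : EuclideanSpace ℝ ι) :
    let v := fun y => Real.exp (a * ‖y - p‖ ^ 2) * u y
    Real.exp (a * ‖x - p‖ ^ 2) * laplacian u x
      = (laplacian v x + (2 * a) ^ 2 * ‖x - p‖ ^ 2 * v x)
        + (-2 * (2 * a) * radialDeriv p v x - Fintype.card ι * (2 * a) * v x) := by
  intro v
  have hv : v = fun y => Real.exp (a * ‖y - p‖ ^ 2) * u y := rfl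
  have hvx : v x = Real.exp (a * ‖x - p‖ ^ 2) * u x := rfl
  have hsq : ∑ k, (2 * a * (x k - p k)) ^ 2 = (2 * a) ^ 2 * ‖x - p‖ ^ 2 := by
    simp only [mul_pow _ (_ - _), ← Finset.mul_sum, sum_sq_sub_eq_norm_sub_sq]
  have hrad : ∑ k, 2 * a * (x k - p k) * partialDeriv k v x = 2 * a * radialDeriv p v x := by
    simp only [radialDeriv, Finset.mul_sum, mul_assoc]
  rw [exp_mul_laplacian (φ := fun y => a * ‖y - p‖ ^ 2)
      (contDiff_const.mul ((contDiff_id.sub contDiff_const).norm_sq ℝ)) hu, ← hv,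
    laplacian_weight]
  simp only [partialDeriv_weight, hsq, hrad, ← hvx]
  ring

theorem exp_weight_sq_mul_sum_sq_partialDeriv_le (hu : Differentiable ℝ u)
    (x : EuclideanSpace ℝ ι) :
    let v := fun y => Real.exp (a * ‖y - p‖ ^ 2) * u y
    Real.exp (a * ‖x - p‖ ^ 2) ^ 2 * ∑ k, partialDeriv k u x ^ 2
      ≤ 2 * ∑ k, partialDeriv k v x ^ 2 + 2 * (2 * a) ^ 2 * ‖x - p‖ ^ 2 * v x ^ 2 := by
  intro v
  have hφ : Differentiable ℝ fun y : EuclideanSpace ℝ ι => a * ‖y - p‖ ^ 2 :=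
    (differentiable_const _).mul ((differentiable_id.sub_const p).norm_sq ℝ)
  have hdv : ∀ k, partialDeriv k v x
      = 2 * a * (x k - p k) * v x + Real.exp (a * ‖x - p‖ ^ 2) * partialDeriv k u x :=
    fun k => by rw [partialDeriv_exp_mul (hφ x) (hu x), partialDeriv_weight]
  calc Real.exp (a * ‖x - p‖ ^ 2) ^ 2 * ∑ k, partialDeriv k u x ^ 2
      ≤ ∑ k, (2 * partialDeriv k v x ^ 2 + 2 * (2 * a) ^ 2 * (x k - p k) ^ 2 * v x ^ 2) := by
        rw [Finset.mul_sum]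
        refine Finset.sum_le_sum fun k _ => ?_
        rw [hdv k]
        nlinarith [sq_nonneg (2 * (2 * a * (x k - p k) * v x)
          + Real.exp (a * ‖x - p‖ ^ 2) * partialDeriv k u x)]
    _ = 2 * ∑ k, partialDeriv k v x ^ 2 + 2 * (2 * a) ^ 2 * ‖x - p‖ ^ 2 * v x ^ 2 := by
        rw [Finset.sum_add_distrib, ← Finset.mul_sum, ← sum_sq_sub_eq_norm_sub_sq]
        congr 1
        rw [Finset.mul_sum, Finset.sum_mul]

end Weight

section Estimate

theorem integrable_mul_sum_sq_partialDeriv {w u : EuclideanSpace ℝ ι → ℝ} (hw : Continuous w)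
    (hu : ContDiff ℝ 1 u) (hcs : HasCompactSupport u) :
    Integrable fun x => w x * ∑ k, partialDeriv k u x ^ 2 := by
  simp only [Finset.mul_sum]
  exact integrable_finsetSum _ fun k _ =>
    integrable_mul_sq_of_hasCompactSupport hw (continuous_partialDeriv hu k) (hcs.partialDeriv k)

variable {a : ℝ} (p : EuclideanSpace ℝ ι) {u : EuclideanSpace ℝ ι → ℝ}

theorem carleman_commutator_le (hu : ContDiff ℝ 2 u) (hcs : HasCompactSupport u) :
    let v := fun y => Real.exp (a * ‖y - p‖ ^ 2) * u y
    16 * a * (∑ k, ∫ x, partialDeriv k v x ^ 2) + 64 * a ^ 3 * (∫ x, ‖x - p‖ ^ 2 * v x ^ 2)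
      ≤ ∫ x, Real.exp (a * ‖x - p‖ ^ 2) ^ 2 * laplacian u x ^ 2 := by
  intro v
  have hv : ContDiff ℝ 2 v :=
    (contDiff_const.mul ((contDiff_id.sub contDiff_const).norm_sq ℝ)).exp.mul hu
  have hvc : HasCompactSupport v := hcs.mul_left
  set S := fun x => laplacian v x + (2 * a) ^ 2 * ‖x - p‖ ^ 2 * v x
  set A := fun x => -2 * (2 * a) * radialDeriv p v x - Fintype.card ι * (2 * a) * v x
  have hS : Continuous S := by
    have := continuous_laplacian hv
    have := hv.continuous
    fun_prop
  have hA : Continuous A := by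
    have := (contDiff_radialDeriv (m := 1) p hv).continuous
    have := hv.continuous
    fun_prop
  have hAc : HasCompactSupport A := .intro hvc fun x hx => by
    simp [A, radialDeriv_of_notMem_tsupport p hx, image_eq_zero_of_notMem_tsupport hx]
  calc 16 * a * (∑ k, ∫ x, partialDeriv k v x ^ 2) + 64 * a ^ 3 * (∫ x, ‖x - p‖ ^ 2 * v x ^ 2)
      = ∫ x, 4 * (S x * A x) := by
        rw [integral_const_mul, integral_carleman_commutator p (2 * a) hv hvc]
        ring
    _ ≤ ∫ x, Real.exp (a * ‖x - p‖ ^ 2) ^ 2 * laplacian u x ^ 2 := by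
        refine integral_mono ((integrable_mul_of_hasCompactSupport hS hA hAc).const_mul 4)
          (integrable_mul_sq_of_hasCompactSupport (by fun_prop) (continuous_laplacian hu)
            hcs.laplacian) fun x => ?_
        rw [← mul_pow, exp_weight_mul_laplacian a p hu x, ← mul_assoc]
        exact four_mul_le_sq_add _ _

theorem integral_exp_weight_sq_mul_sum_sq_partialDeriv_le (hu : ContDiff ℝ 2 u)
    (hcs : HasCompactSupport u) :
    let v := fun y => Real.exp (a * ‖y - p‖ ^ 2) * u y
    ∫ x, Real.exp (a * ‖x - p‖ ^ 2) ^ 2 * ∑ k, partialDeriv k u x ^ 2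
      ≤ 2 * (∑ k, ∫ x, partialDeriv k v x ^ 2) + 2 * (2 * a) ^ 2 * ∫ x, ‖x - p‖ ^ 2 * v x ^ 2 := by
  intro v
  have hv : ContDiff ℝ 2 v :=
    (contDiff_const.mul ((contDiff_id.sub contDiff_const).norm_sq ℝ)).exp.mul hu
  have hvc : HasCompactSupport v := hcs.mul_left
  have iG : ∀ k, Integrable fun x => partialDeriv k v x ^ 2 := fun k =>
    (integrable_mul_sq_of_hasCompactSupport continuous_const
      (continuous_partialDeriv (hv.of_le one_le_two) k) (hvc.partialDeriv k)).congr
      (.of_forall fun x => one_mul _)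
  have iG' : Integrable fun x => 2 * ∑ k, partialDeriv k v x ^ 2 :=
    (integrable_finsetSum _ fun k _ => iG k).const_mul 2
  have iW : Integrable fun x => 2 * (2 * a) ^ 2 * (‖x - p‖ ^ 2 * v x ^ 2) :=
    (integrable_mul_sq_of_hasCompactSupport (by fun_prop) hv.continuous hvc).const_mul _
  calc ∫ x, Real.exp (a * ‖x - p‖ ^ 2) ^ 2 * ∑ k, partialDeriv k u x ^ 2
      ≤ ∫ x, (2 * ∑ k, partialDeriv k v x ^ 2 + 2 * (2 * a) ^ 2 * (‖x - p‖ ^ 2 * v x ^ 2)) :=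
        integral_mono_of_nonneg (.of_forall fun x => by positivity) (iG'.add iW)
          (.of_forall fun x => (exp_weight_sq_mul_sum_sq_partialDeriv_le a p
            (hu.differentiable two_ne_zero) x).trans_eq (by ring))
    _ = 2 * (∑ k, ∫ x, partialDeriv k v x ^ 2) + 2 * (2 * a) ^ 2 * ∫ x, ‖x - p‖ ^ 2 * v x ^ 2 := by
        rw [integral_add iG' iW, integral_const_mul, integral_const_mul,
          integral_finsetSum _ fun k _ => iG k]

theorem carleman_real (ha : 0 ≤ a) {r : ℝ} (hu : ContDiff ℝ 2 u) (hcs : HasCompactSupport u)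
    (hsupp : ∀ x, u x ≠ 0 → r ^ 2 ≤ ‖x - p‖ ^ 2) :
    32 * a ^ 3 * r ^ 2 * (∫ x, Real.exp (a * ‖x - p‖ ^ 2) ^ 2 * u x ^ 2)
        + 4 * a * (∫ x, Real.exp (a * ‖x - p‖ ^ 2) ^ 2 * ∑ k, partialDeriv k u x ^ 2)
      ≤ ∫ x, Real.exp (a * ‖x - p‖ ^ 2) ^ 2 * laplacian u x ^ 2 := by
  have hlower := carleman_commutator_le p (a := a) hu hcs
  have hgrad := integral_exp_weight_sq_mul_sum_sq_partialDeriv_le p (a := a) hu hcs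
  set v := fun y => Real.exp (a * ‖y - p‖ ^ 2) * u y
  set G := ∑ k, ∫ x, partialDeriv k v x ^ 2
  set W := ∫ x, ‖x - p‖ ^ 2 * v x ^ 2
  have hG : 0 ≤ G := Finset.sum_nonneg fun k _ => integral_nonneg fun x => sq_nonneg _
  have hmass : r ^ 2 * ∫ x, Real.exp (a * ‖x - p‖ ^ 2) ^ 2 * u x ^ 2 ≤ W := by
    rw [← integral_const_mul]
    refine integral_mono_of_nonneg (.of_forall fun x => by positivity)
      (integrable_mul_sq_of_hasCompactSupport (by fun_prop) (f := v) (by fun_prop) hcs.mul_left)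
      (.of_forall fun x => ?_)
    by_cases hx : u x = 0
    · simp [v, hx]
    · simpa only [v, mul_pow, ← mul_assoc] using mul_le_mul_of_nonneg_right (hsupp x hx)
        (by positivity : 0 ≤ Real.exp (a * ‖x - p‖ ^ 2) ^ 2 * u x ^ 2)
  nlinarith [mul_le_mul_of_nonneg_left hmass (by positivity : (0 : ℝ) ≤ 32 * a ^ 3),
    mul_le_mul_of_nonneg_left hgrad (by positivity : (0 : ℝ) ≤ 4 * a), mul_nonneg ha hG]

theorem norm_fderiv_sq_le_sum_sq_partialDeriv_re_add_im {g : EuclideanSpace ℝ ι → ℂ}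
    {x : EuclideanSpace ℝ ι} (hg : DifferentiableAt ℝ g x) :
    ‖fderiv ℝ g x‖ ^ 2 ≤ ∑ k, partialDeriv k (fun y => (g y).re) x ^ 2
      + ∑ k, partialDeriv k (fun y => (g y).im) x ^ 2 := by
  have hk : ∀ k, ‖partialDeriv k g x‖ ^ 2
      = partialDeriv k (fun y => (g y).re) x ^ 2 + partialDeriv k (fun y => (g y).im) x ^ 2 :=
    fun k => by
      rw [sq_norm_eq_re_sq_add_im_sq, ← Complex.reCLM_apply, ← Complex.imCLM_apply,
        ← partialDeriv_clm_comp _ hg, ← partialDeriv_clm_comp _ hg]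
      rfl
  rw [← Finset.sum_add_distrib, ← Finset.sum_congr rfl fun k _ => hk k]
  exact norm_sq_le_sum_norm_sq_apply_single _

theorem carleman_complex (ha : 0 ≤ a) {r : ℝ} {g : EuclideanSpace ℝ ι → ℂ}
    (hg : ContDiff ℝ 2 g) (hcs : HasCompactSupport g)
    (hsupp : ∀ x, g x ≠ 0 → r ^ 2 ≤ ‖x - p‖ ^ 2) :
    32 * a ^ 3 * r ^ 2 * (∫ x, Real.exp (a * ‖x - p‖ ^ 2) ^ 2 * ‖g x‖ ^ 2)
        + 4 * a * (∫ x, Real.exp (a * ‖x - p‖ ^ 2) ^ 2 * ‖fderiv ℝ g x‖ ^ 2)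
      ≤ ∫ x, Real.exp (a * ‖x - p‖ ^ 2) ^ 2 * ‖laplacian g x‖ ^ 2 := by
  have hE : Continuous fun x : EuclideanSpace ℝ ι => Real.exp (a * ‖x - p‖ ^ 2) ^ 2 := by
    fun_prop
  have hre : ContDiff ℝ 2 fun x => (g x).re := Complex.reCLM.contDiff.comp hg
  have him : ContDiff ℝ 2 fun x => (g x).im := Complex.imCLM.contDiff.comp hg
  have hcsre : HasCompactSupport fun x => (g x).re := hcs.comp_left Complex.zero_re
  have hcsim : HasCompactSupport fun x => (g x).im := hcs.comp_left Complex.zero_im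
  have hΔre : ∀ x, laplacian (fun y => (g y).re) x = (laplacian g x).re :=
    laplacian_clm_comp Complex.reCLM hg
  have hΔim : ∀ x, laplacian (fun y => (g y).im) x = (laplacian g x).im :=
    laplacian_clm_comp Complex.imCLM hg
  have h₁ := carleman_real p ha hre hcsre fun x hx => hsupp x fun h => hx (by simp [h])
  have h₂ := carleman_real p ha him hcsim fun x hx => hsupp x fun h => hx (by simp [h])
  have i₁ := integrable_mul_sum_sq_partialDeriv hE (hre.of_le one_le_two) hcsre
  have i₂ := integrable_mul_sum_sq_partialDeriv hE (him.of_le one_le_two) hcsim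
  have hgrad : ∫ x, Real.exp (a * ‖x - p‖ ^ 2) ^ 2 * ‖fderiv ℝ g x‖ ^ 2
      ≤ (∫ x, Real.exp (a * ‖x - p‖ ^ 2) ^ 2 * ∑ k, partialDeriv k (fun y => (g y).re) x ^ 2)
        + ∫ x, Real.exp (a * ‖x - p‖ ^ 2) ^ 2 * ∑ k, partialDeriv k (fun y => (g y).im) x ^ 2 := by
    rw [← integral_add i₁ i₂]
    refine integral_mono_of_nonneg (.of_forall fun x => by positivity) (i₁.add i₂)
      (.of_forall fun x => ?_)
    simpa only [← mul_add] using mul_le_mul_of_nonneg_left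
      (norm_fderiv_sq_le_sum_sq_partialDeriv_re_add_im (hg.differentiable two_ne_zero x))
      (by positivity : 0 ≤ Real.exp (a * ‖x - p‖ ^ 2) ^ 2)
  simp only [hΔre, hΔim] at h₁ h₂
  rw [integral_mul_norm_sq_eq_add hE hg.continuous hcs,
    integral_mul_norm_sq_eq_add hE (continuous_laplacian hg) hcs.laplacian]
  nlinarith [mul_le_mul_of_nonneg_left hgrad (by positivity : (0 : ℝ) ≤ 4 * a)]

end Estimate

end Carleman

theorem carleman_continuous_laplacian (d : ℕ) :
    ∃ c : ℝ, 0 < c ∧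
      ∀ α R : ℝ, 0 < α → 0 < R →
        ∀ g : EuclideanSpace ℝ (Fin (d + 1)) → ℂ,
          ContDiff ℝ 2 g → HasCompactSupport g →
          (∀ x, g x ≠ 0 →
            1 ≤ ‖R⁻¹ • x + (3 : ℝ) • (EuclideanSpace.single 0 1 :
              EuclideanSpace ℝ (Fin (d + 1)))‖ ^ 2) →
          α ^ ((3 : ℝ) / 2) / R ^ 2 *
              Real.sqrt (∫ x : EuclideanSpace ℝ (Fin (d + 1)),
                Real.exp (α * ‖R⁻¹ • x + (3 : ℝ) • (EuclideanSpace.single 0 1 :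
                    EuclideanSpace ℝ (Fin (d + 1)))‖ ^ 2) ^ 2 * ‖g x‖ ^ 2) +
            α ^ ((1 : ℝ) / 2) / R *
              Real.sqrt (∫ x : EuclideanSpace ℝ (Fin (d + 1)),
                Real.exp (α * ‖R⁻¹ • x + (3 : ℝ) • (EuclideanSpace.single 0 1 :
                    EuclideanSpace ℝ (Fin (d + 1)))‖ ^ 2) ^ 2 * ‖fderiv ℝ g x‖ ^ 2) ≤
          c * Real.sqrt (∫ x : EuclideanSpace ℝ (Fin (d + 1)),
                Real.exp (α * ‖R⁻¹ • x + (3 : ℝ) • (EuclideanSpace.single 0 1 :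
                    EuclideanSpace ℝ (Fin (d + 1)))‖ ^ 2) ^ 2 * ‖lapR g x‖ ^ 2) := by
  refine ⟨1, one_pos, fun α R hα hR g hg hcs hloc => ?_⟩
  set c : EuclideanSpace ℝ (Fin (d + 1)) := (3 : ℝ) • EuclideanSpace.single 0 1
  set p := -(R • c)
  have hweight : ∀ x, α * ‖R⁻¹ • x + c‖ ^ 2 = α / R ^ 2 * ‖x - p‖ ^ 2 := fun x => by
    rw [Carleman.norm_inv_smul_add_sq hR]
    ring
  have hsupp : ∀ x, g x ≠ 0 → R ^ 2 ≤ ‖x - p‖ ^ 2 := fun x hx =>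
    (one_le_div (pow_pos hR 2)).1 (Carleman.norm_inv_smul_add_sq hR x c ▸ hloc x hx)
  have key := Carleman.carleman_complex p (a := α / R ^ 2) (by positivity) hg hcs hsupp
  simp only [hweight, Carleman.lapR_eq_laplacian, one_mul]
  set I₀ := ∫ x, Real.exp (α / R ^ 2 * ‖x - p‖ ^ 2) ^ 2 * ‖g x‖ ^ 2
  set I₁ := ∫ x, Real.exp (α / R ^ 2 * ‖x - p‖ ^ 2) ^ 2 * ‖fderiv ℝ g x‖ ^ 2
  have hI₀ : 0 ≤ I₀ := integral_nonneg fun x => by positivity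
  have hI₁ : 0 ≤ I₁ := integral_nonneg fun x => by positivity
  refine Carleman.mul_sqrt_add_mul_sqrt_le_sqrt hI₀ hI₁ (le_trans ?_ key)
  rw [div_pow, div_pow, Carleman.sq_rpow_div_two hα.le, Carleman.sq_rpow_div_two hα.le,
    Real.rpow_one, show (3 : ℝ) = (3 : ℕ) by norm_num, Real.rpow_natCast]
  have e : 32 * (α / R ^ 2) ^ 3 * R ^ 2 * I₀ = 32 * (α ^ 3 / (R ^ 2) ^ 2 * I₀) := by field_simp
  have hA : 0 ≤ α ^ 3 / (R ^ 2) ^ 2 * I₀ := by positivity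
  have hB : 0 ≤ α / R ^ 2 * I₁ := by positivity
  linarith
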